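/- arXiv:2407.15752 — 3 statements merged into one kernel-verified Lean document; each statement's English description precedes it below -/
import Mathlib

section
/- For any θ₁, θ₂ ∈ [-π/2, π/2] and any phase vector Φ, the PDAF A(Φ,θ) = |Σ_{m=1}^M exp(i φ_m) exp(-i (2πΔ/λ)(m-1)(sin θ_h + sin θ))|² satisfies |A(Φ,θ₂) - A(Φ,θ₁)| ≤ ((M-1) M² π Δ / λ) |θ₂ - θ₁|; i.e., A(Φ,·) is Lipschitz continuous on [-π/2, π/2] with Lipschitz constant (M-1)M²πΔ/λ. -/
/-!
Expanding the square, `A θ = Re ∑ₘ ∑ₙ exp (i (φₘ - φₙ - c (m - n) (sin θh + sin θ)))` with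
`c = 2πΔ/λ`. Since `t ↦ exp (i t)` and `sin` are 1-Lipschitz, the `(m, n)` term moves by at most
`c |m - n| |θ₂ - θ₁|`, and `∑ₘ ∑ₙ |m - n| ≤ M² (M - 1) / 2`.
-/

open Complex Finset

lemma norm_exp_I_mul_ofReal_sub_exp_le (a b : ℝ) :
    ‖exp (I * a) - exp (I * b)‖ ≤ |a - b| := by
  have hfactor : exp (I * a) - exp (I * b) = exp (I * b) * (exp (I * ↑(a - b)) - 1) := by
    rw [mul_sub, ← Complex.exp_add]; push_cast; ring_nf
  rw [hfactor, norm_mul, norm_exp_I_mul_ofReal, one_mul, ← Real.norm_eq_abs]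
  exact Real.norm_exp_I_mul_ofReal_sub_one_le

lemma sq_norm_sum_exp_I_mul_eq {ι : Type*} (s : Finset ι) (x : ι → ℝ) :
    ‖∑ m ∈ s, exp (I * x m)‖ ^ 2 = (∑ m ∈ s, ∑ n ∈ s, exp (I * ↑(x m - x n))).re := by
  have hconj : ∀ n, (starRingEnd ℂ) (exp (I * x n)) = exp (-(I * x n)) := fun n => by
    rw [← Complex.exp_conj]; simp
  rw [← Complex.ofReal_re (‖_‖ ^ 2), Complex.ofReal_pow, ← Complex.mul_conj', map_sum,
    sum_mul_sum]
  simp only [hconj, ← Complex.exp_add]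
  push_cast
  ring_nf

lemma abs_sq_norm_sum_exp_I_mul_sub_le {ι : Type*} (s : Finset ι) (x y : ι → ℝ) :
    |‖∑ m ∈ s, exp (I * x m)‖ ^ 2 - ‖∑ m ∈ s, exp (I * y m)‖ ^ 2| ≤
      ∑ m ∈ s, ∑ n ∈ s, |(x m - x n) - (y m - y n)| := by
  rw [sq_norm_sum_exp_I_mul_eq, sq_norm_sum_exp_I_mul_eq, ← Complex.sub_re, ← sum_sub_distrib]
  calc _ ≤ ‖∑ m ∈ s, (∑ n ∈ s, exp (I * ↑(x m - x n)) - ∑ n ∈ s, exp (I * ↑(y m - y n)))‖ :=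
        abs_re_le_norm _
    _ ≤ ∑ m ∈ s, ∑ n ∈ s, ‖exp (I * ↑(x m - x n)) - exp (I * ↑(y m - y n))‖ :=
        (norm_sum_le _ _).trans <| sum_le_sum fun m _ => by
          rw [← sum_sub_distrib]; exact norm_sum_le _ _
    _ ≤ _ := sum_le_sum fun m _ => sum_le_sum fun n _ => norm_exp_I_mul_ofReal_sub_exp_le _ _

/-- Pairing `m` with its reflection `M - 1 - m`: `|m - n| + |M - 1 - m - n| ≤ M - 1`. -/
lemma sum_range_sum_range_abs_sub_le (M : ℕ) :
    ∑ m ∈ range M, ∑ n ∈ range M, |(m : ℝ) - n| ≤ (M : ℝ) ^ 2 * (M - 1) / 2 := by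
  have hreflect : ∑ m ∈ range M, ∑ n ∈ range M, |(m : ℝ) - n| =
      ∑ m ∈ range M, ∑ n ∈ range M, |((M : ℝ) - 1 - m) - n| := by
    rw [← sum_range_reflect]
    refine sum_congr rfl fun m hm => sum_congr rfl fun n _ => ?_
    have := mem_range.1 hm
    rw [Nat.cast_sub (by omega), Nat.cast_sub (by omega), Nat.cast_one]
  have hpair : ∀ m ∈ range M, ∀ n ∈ range M,
      |(m : ℝ) - n| + |((M : ℝ) - 1 - m) - n| ≤ M - 1 := by
    intro m hm n hn
    have hm' : (m : ℝ) + 1 ≤ M := by exact_mod_cast mem_range.1 hm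
    have hn' : (n : ℝ) + 1 ≤ M := by exact_mod_cast mem_range.1 hn
    have : (0 : ℝ) ≤ m := m.cast_nonneg
    have : (0 : ℝ) ≤ n := n.cast_nonneg
    rcases abs_cases ((m : ℝ) - n) with ⟨h, -⟩ | ⟨h, -⟩ <;>
      rcases abs_cases ((M : ℝ) - 1 - m - n) with ⟨h', -⟩ | ⟨h', -⟩ <;> linarith
  have htwice : 2 * ∑ m ∈ range M, ∑ n ∈ range M, |(m : ℝ) - n| ≤ (M : ℝ) ^ 2 * (M - 1) := by
    calc _ = ∑ m ∈ range M, ∑ n ∈ range M, (|(m : ℝ) - n| + |((M : ℝ) - 1 - m) - n|) := by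
          rw [two_mul]; nth_rw 2 [hreflect]; simp only [← sum_add_distrib]
      _ ≤ ∑ m ∈ range M, ∑ n ∈ range M, ((M : ℝ) - 1) :=
          sum_le_sum fun m hm => sum_le_sum fun n hn => hpair m hm n hn
      _ = _ := by simp; ring
  linarith

theorem pdaf_lipschitz_general (M : ℕ) (Δ lam θh : ℝ) (hΔ : 0 < Δ) (hlam : 0 < lam)
    (φ : ℕ → ℝ) (A : ℝ → ℝ)
    (hA : ∀ θ, A θ = ‖∑ m ∈ Finset.range M,
      Complex.exp (Complex.I *
        ((φ m - (2 * Real.pi * Δ / lam) * m * (Real.sin θh + Real.sin θ) : ℝ) : ℂ))‖ ^ 2)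
    (θ₁ θ₂ : ℝ) :
    |A θ₂ - A θ₁| ≤ (((M : ℝ) - 1) * (M : ℝ) ^ 2 * Real.pi * Δ / lam) * |θ₂ - θ₁| := by
  set c := 2 * Real.pi * Δ / lam
  have hc : 0 ≤ c := by positivity
  have hphase : ∀ m n : ℕ,
      |((φ m - c * m * (Real.sin θh + Real.sin θ₂)) - (φ n - c * n * (Real.sin θh + Real.sin θ₂))) -
        ((φ m - c * m * (Real.sin θh + Real.sin θ₁)) - (φ n - c * n * (Real.sin θh + Real.sin θ₁)))|
        = c * |Real.sin θ₂ - Real.sin θ₁| * |(m : ℝ) - n| := fun m n => by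
    rw [show _ - _ = -(c * (Real.sin θ₂ - Real.sin θ₁) * (m - n)) by ring, abs_neg, abs_mul,
      abs_mul, abs_of_nonneg hc]
  rw [hA, hA]
  calc _ ≤ _ := abs_sq_norm_sum_exp_I_mul_sub_le _
        (fun m => φ m - c * m * (Real.sin θh + Real.sin θ₂))
        (fun m => φ m - c * m * (Real.sin θh + Real.sin θ₁))
    _ = c * |Real.sin θ₂ - Real.sin θ₁| * ∑ m ∈ range M, ∑ n ∈ range M, |(m : ℝ) - n| := by
        simp only [hphase, mul_sum]
    _ ≤ c * |θ₂ - θ₁| * ((M : ℝ) ^ 2 * (M - 1) / 2) := by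
        gcongr c * ?_ * ?_
        · exact Real.abs_sin_sub_sin_le θ₂ θ₁
        · exact sum_range_sum_range_abs_sub_le M
    _ = _ := by ring

/-- The PDAF is Lipschitz continuous on `[-π/2, π/2]` with Lipschitz constant
`(M-1)M²πΔ/λ`. -/
theorem pdaf_lipschitz (M : ℕ) (hM : 0 < M) (Δ lam θh : ℝ) (hΔ : 0 < Δ) (hlam : 0 < lam)
    (φ : ℕ → ℝ) (A : ℝ → ℝ)
    (hA : ∀ θ, A θ = ‖∑ m ∈ Finset.range M,
      Complex.exp (Complex.I *
        ((φ m - (2 * Real.pi * Δ / lam) * m * (Real.sin θh + Real.sin θ) : ℝ) : ℂ))‖ ^ 2)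
    (θ₁ θ₂ : ℝ) (h₁ : θ₁ ∈ Set.Icc (-(Real.pi / 2)) (Real.pi / 2))
    (h₂ : θ₂ ∈ Set.Icc (-(Real.pi / 2)) (Real.pi / 2)) :
    |A θ₂ - A θ₁| ≤ (((M : ℝ) - 1) * (M : ℝ) ^ 2 * Real.pi * Δ / lam) * |θ₂ - θ₁| :=
  pdaf_lipschitz_general M Δ lam θh hΔ hlam φ A hA θ₁ θ₂
end

section
/- Let a_k = 2π(Δ/λ)k and J₀(x) = (1/π)∫_{-π/2}^{π/2} exp(i x sin θ) dθ. For θ uniformly distributed on [-π/2, π/2], the expected PDAF satisfies E_θ[A(Φ,θ)] = M + 2 Σ_{n=1}^{M-1} Σ_{m=n+1}^{M} J₀(a_{m-n}) cos(φ_m - φ_n - a_{m-n} sin θ_h), where A(Φ,θ) = |Σ_{m=1}^M exp(i(φ_m - (2πΔ/λ)(m-1)(sin θ_h + sin θ)))|². -/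
/-!
Expanding the squared modulus of the array sum gives `A = Σ_{m,n} cos(α_{mn} - a_{m-n} sin θ)`
with `α_{mn} = φ_m - φ_n - a_{m-n} sin θ_h`. Averaging over `θ`, the cosine splits into
`cos α · cos(a sin θ) + sin α · sin(a sin θ)`; the second part integrates to zero by oddness,
and the first gives Bessel's integral `J₀(a)`. The double sum is symmetric in `(m, n)`, so it
folds into the diagonal, where `J₀(0) = 1`, plus twice the sum over `n < m`.
-/

open Complex Finset MeasureTheory
open scoped Real

theorem intervalIntegral.integral_neg_self_eq_zero_of_odd {E : Type*} [NormedAddCommGroup E]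
    [NormedSpace ℝ E] {f : ℝ → E} (hf : Function.Odd f) (a : ℝ) :
    ∫ x in -a..a, f x = 0 := by
  have hneg := intervalIntegral.integral_comp_neg (a := -a) (b := a) f
  simp only [show ∀ x, f (-x) = -f x from hf, intervalIntegral.integral_neg, neg_neg] at hneg
  have htwice : (2 : ℝ) • ∫ x in -a..a, f x = 0 := by
    rw [two_smul]
    nth_rewrite 1 [← hneg]
    exact neg_add_cancel _
  exact (smul_eq_zero.mp htwice).resolve_left two_ne_zero

theorem Finset.sum_range_sum_range_of_symm {M : Type*} [AddCommMonoid M] (N : ℕ)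
    (f : ℕ → ℕ → M) (hf : ∀ m n, f m n = f n m) :
    ∑ m ∈ range N, ∑ n ∈ range N, f m n
      = ∑ m ∈ range N, f m m + 2 • ∑ n ∈ range N, ∑ m ∈ Ioo n N, f m n := by
  have hrow : ∀ m ∈ range N, ∑ n ∈ range N, f m n
      = ∑ n ∈ range m, f m n + (f m m + ∑ n ∈ Ioo m N, f m n) := by
    intro m hm
    rw [mem_range] at hm
    rw [range_eq_Ico, ← sum_Ico_consecutive _ (Nat.zero_le m) hm.le,
      sum_eq_sum_Ico_succ_bot hm, Ico_add_one_left_eq_Ioo, ← range_eq_Ico]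
  have hlower : ∑ m ∈ range N, ∑ n ∈ range m, f m n
      = ∑ n ∈ range N, ∑ m ∈ Ioo n N, f m n :=
    sum_comm' fun m n => by simp only [mem_range, mem_Ioo]; omega
  have hupper : ∑ m ∈ range N, ∑ n ∈ Ioo m N, f m n
      = ∑ n ∈ range N, ∑ m ∈ Ioo n N, f m n :=
    sum_congr rfl fun m _ => sum_congr rfl fun n _ => hf m n
  rw [sum_congr rfl hrow, sum_add_distrib, sum_add_distrib, hlower, hupper, two_nsmul]
  abel

theorem Complex.sq_norm_sum_exp_ofReal_mul_I {ι : Type*} (s : Finset ι) (ψ : ι → ℝ) :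
    ‖∑ i ∈ s, exp (ψ i * I)‖ ^ 2 = ∑ i ∈ s, ∑ j ∈ s, Real.cos (ψ i - ψ j) := by
  simp only [Complex.sq_norm, normSq_apply, re_sum, im_sum, exp_ofReal_mul_I_re,
    exp_ofReal_mul_I_im, sum_mul_sum, ← sum_add_distrib, Real.cos_sub]

noncomputable def besselJ0 (x : ℝ) : ℝ :=
  π⁻¹ * ∫ θ in -(π / 2)..π / 2, Real.cos (x * Real.sin θ)

theorem besselJ0_zero : besselJ0 0 = 1 := by
  simp [besselJ0, Real.pi_ne_zero]

theorem besselJ0_neg (x : ℝ) : besselJ0 (-x) = besselJ0 x := by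
  simp [besselJ0]

theorem besselJ0_eq_re_integral_exp (x : ℝ) :
    besselJ0 x
      = ((1 / (π : ℂ)) *
          ∫ θ in -(π / 2)..π / 2, exp (I * ((x * Real.sin θ : ℝ) : ℂ))).re := by
  have hint : IntervalIntegrable (fun θ : ℝ => exp (I * ((x * Real.sin θ : ℝ) : ℂ))) volume
      (-(π / 2)) (π / 2) :=
    (by fun_prop : Continuous _).intervalIntegrable _ _
  rw [one_div, ← ofReal_inv, re_ofReal_mul, ← RCLike.re_to_complex,
    ← intervalIntegral.intervalIntegral_re hint, besselJ0]
  congr 1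
  refine intervalIntegral.integral_congr fun θ _ => ?_
  rw [RCLike.re_to_complex, mul_comm I, exp_ofReal_mul_I_re]

theorem inv_pi_mul_integral_cos_sub_mul_sin (α b : ℝ) :
    π⁻¹ * ∫ θ in -(π / 2)..π / 2, Real.cos (α - b * Real.sin θ)
      = besselJ0 b * Real.cos α := by
  have hodd : Function.Odd fun θ => Real.sin (b * Real.sin θ) := fun θ => by
    simp only [Real.sin_neg, mul_neg]
  have hcont : ∀ f : ℝ → ℝ, Continuous f →
      IntervalIntegrable (fun θ => f (b * Real.sin θ)) volume (-(π / 2)) (π / 2) :=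
    fun _ hf => (hf.comp (by fun_prop)).intervalIntegrable _ _
  simp only [Real.cos_sub α]
  rw [intervalIntegral.integral_add ((hcont _ Real.continuous_cos).const_mul _)
      ((hcont _ Real.continuous_sin).const_mul _), intervalIntegral.integral_const_mul,
    intervalIntegral.integral_const_mul,
    intervalIntegral.integral_neg_self_eq_zero_of_odd hodd, besselJ0]
  ring

theorem inv_pi_mul_integral_sq_norm_sum_exp {ι : Type*} (s : Finset ι) (ψ k : ι → ℝ) :
    π⁻¹ * ∫ θ in -(π / 2)..π / 2,
        ‖∑ i ∈ s, exp ((ψ i - k i * Real.sin θ : ℝ) * I)‖ ^ 2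
      = ∑ i ∈ s, ∑ j ∈ s, besselJ0 (k i - k j) * Real.cos (ψ i - ψ j) := by
  have hphase : ∀ θ i j, (ψ i - k i * Real.sin θ) - (ψ j - k j * Real.sin θ)
      = (ψ i - ψ j) - (k i - k j) * Real.sin θ := fun _ _ _ => by ring
  have hint : ∀ i j, IntervalIntegrable
      (fun θ => Real.cos ((ψ i - ψ j) - (k i - k j) * Real.sin θ)) volume
      (-(π / 2)) (π / 2) :=
    fun _ _ => (by fun_prop : Continuous _).intervalIntegrable _ _
  simp only [sq_norm_sum_exp_ofReal_mul_I, hphase]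
  rw [intervalIntegral.integral_finsetSum fun i _ =>
    (continuous_finsetSum _ fun j _ => by fun_prop).intervalIntegrable _ _, mul_sum]
  refine sum_congr rfl fun i _ => ?_
  rw [intervalIntegral.integral_finsetSum fun j _ => hint i j, mul_sum]
  exact sum_congr rfl fun j _ => inv_pi_mul_integral_cos_sub_mul_sin _ _

theorem expected_pdaf_general (M : ℕ) (Δ lam θh : ℝ)
    (φ : ℕ → ℝ) (A : ℝ → ℝ)
    (hA : ∀ θ, A θ = ‖∑ m ∈ Finset.range M,
      Complex.exp (Complex.I *
        ((φ m - (2 * Real.pi * Δ / lam) * m * (Real.sin θh + Real.sin θ) : ℝ) : ℂ))‖ ^ 2)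
    (a : ℕ → ℝ) (ha : ∀ k, a k = 2 * Real.pi * (Δ / lam) * k)
    (J0 : ℝ → ℝ)
    (hJ0 : ∀ x, J0 x = ((1 / (Real.pi : ℂ)) * ∫ θ in (-(Real.pi / 2))..(Real.pi / 2),
        Complex.exp (Complex.I * ((x * Real.sin θ : ℝ) : ℂ))).re) :
    (1 / Real.pi) * ∫ θ in (-(Real.pi / 2))..(Real.pi / 2), A θ
      = M + 2 * ∑ n ∈ Finset.range M, ∑ m ∈ Finset.Ioo n M,
          J0 (a (m - n)) * Real.cos (φ m - φ n - a (m - n) * Real.sin θh) := by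
  obtain rfl : J0 = besselJ0 :=
    funext fun x => (hJ0 x).trans (besselJ0_eq_re_integral_exp x).symm
  set c := 2 * π * Δ / lam
  have hA' : ∀ θ, A θ = ‖∑ m ∈ range M,
      exp ((φ m - c * m * Real.sin θh - c * m * Real.sin θ : ℝ) * I)‖ ^ 2 := fun θ => by
    rw [hA]; congr 4 with m; rw [mul_comm I]; congr 3; ring
  rw [intervalIntegral.integral_congr fun θ _ => hA' θ, one_div,
    inv_pi_mul_integral_sq_norm_sum_exp, sum_range_sum_range_of_symm, nsmul_eq_mul]
  · have hshift : ∀ n, ∀ m ∈ Ioo n M, a (m - n) = c * m - c * n := fun n m hm => by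
      rw [ha, Nat.cast_sub (mem_Ioo.mp hm).1.le]; ring
    simp only [sub_self, besselJ0_zero, Real.cos_zero, mul_one, sum_const, card_range,
      nsmul_eq_mul, Nat.cast_ofNat]
    congr 2
    refine sum_congr rfl fun n _ => sum_congr rfl fun m hm => ?_
    rw [hshift n m hm]
    congr 2
    ring
  · intro m n
    rw [← neg_sub (c * m), besselJ0_neg, ← Real.cos_neg, neg_sub]

/-- Closed form for the average PDAF over a uniformly distributed angle
`θ ~ U[-π/2, π/2]`:
`E_θ[A(Φ,θ)] = M + 2 Σ_{n<m} J₀(a_{m-n}) cos(φ_m - φ_n - a_{m-n} sin θ_h)`. -/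
theorem expected_pdaf (M : ℕ) (hM : 0 < M) (Δ lam θh : ℝ) (hΔ : 0 < Δ) (hlam : 0 < lam)
    (φ : ℕ → ℝ) (A : ℝ → ℝ)
    (hA : ∀ θ, A θ = ‖∑ m ∈ Finset.range M,
      Complex.exp (Complex.I *
        ((φ m - (2 * Real.pi * Δ / lam) * m * (Real.sin θh + Real.sin θ) : ℝ) : ℂ))‖ ^ 2)
    (a : ℕ → ℝ) (ha : ∀ k, a k = 2 * Real.pi * (Δ / lam) * k)
    (J0 : ℝ → ℝ)
    (hJ0 : ∀ x, J0 x = ((1 / (Real.pi : ℂ)) * ∫ θ in (-(Real.pi / 2))..(Real.pi / 2),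
        Complex.exp (Complex.I * ((x * Real.sin θ : ℝ) : ℂ))).re) :
    (1 / Real.pi) * ∫ θ in (-(Real.pi / 2))..(Real.pi / 2), A θ
      = M + 2 * ∑ n ∈ Finset.range M, ∑ m ∈ Finset.Ioo n M,
          J0 (a (m - n)) * Real.cos (φ m - φ n - a (m - n) * Real.sin θh) :=
  expected_pdaf_general M Δ lam θh φ A hA a ha J0 hJ0
end

section
/- (Chu/Zadoff–Chu perfect autocorrelation, even length) Let M be an even positive integer and q an integer with gcd(q, M) = 1, and define Ψ_m = exp(i π q (m-1)²/M) for m = 1,…,M. Then the periodic (cyclic) autocorrelation R[τ] = Σ_{m=0}^{M-1} Ψ_{m+1} conj(Ψ_{((m+τ) mod M)+1}) equals M if τ ≡ 0 (mod M) and 0 otherwise. -/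
/-!
With `ζ = exp (π i / M)`, a primitive `2M`-th root of unity, the sequence is `Ψ m = ζ ^ (q m²)`.
Because `M` is even, `a ≡ b [ZMOD M]` gives `a² ≡ b² [ZMOD 2M]`, so the cyclic index `(m + τ) % M`
may be replaced by `m + τ`; the summand then becomes `ζ ^ (-q τ²) * ω ^ m` with `ω = ζ ^ (-2 q τ)`.
Now `ω` is an `M`-th root of unity, equal to `1` exactly when `M ∣ τ` (as `q` is prime to `M`), and
the autocorrelation is a geometric sum of `ω` over a full period.
-/

open Complex Finset ComplexConjugate Real

theorem geom_sum_eq_zero_of_pow_eq_one {R : Type*} [CommRing R] [IsDomain R] {ω : R} {n : ℕ}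
    (hωn : ω ^ n = 1) (hω : ω ≠ 1) : ∑ i ∈ range n, ω ^ i = 0 :=
  eq_zero_of_ne_zero_of_mul_left_eq_zero (sub_ne_zero_of_ne hω.symm)
    (by rw [mul_neg_geom_sum, hωn, sub_self])

theorem Int.sq_modEq_sq_of_modEq_of_even {n a b : ℤ} (hn : Even n) (h : a ≡ b [ZMOD n]) :
    a ^ 2 ≡ b ^ 2 [ZMOD 2 * n] := by
  obtain ⟨e, rfl⟩ := hn
  obtain ⟨k, hk⟩ := h.dvd
  exact Int.modEq_iff_dvd.mpr
    ⟨k * (a + e * k), by linear_combination (b + a + (e + e) * k) * hk⟩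

theorem IsPrimitiveRoot.zpow_eq_zpow_of_modEq {K : Type*} [Field K] {ζ : K} {N : ℕ}
    (hζ : IsPrimitiveRoot ζ N) {a b : ℤ} (h : a ≡ b [ZMOD N]) : ζ ^ a = ζ ^ b := by
  rcases eq_or_ne N 0 with rfl | hN
  · rw [Nat.cast_zero, Int.modEq_zero_iff] at h
    rw [h]
  · have hζ0 := hζ.ne_zero hN
    rw [← div_eq_one_iff_eq (zpow_ne_zero b hζ0), ← zpow_sub₀ hζ0, hζ.zpow_eq_one_iff_dvd]
    exact h.symm.dvd

theorem IsPrimitiveRoot.conj_zpow {ζ : ℂ} {N : ℕ} (hζ : IsPrimitiveRoot ζ N) (hN : N ≠ 0) (k : ℤ) :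
    conj (ζ ^ k) = ζ ^ (-k) := by
  rw [map_zpow₀, ← inv_eq_conj (norm_eq_one_of_pow_eq_one hζ.pow_eq_one hN), inv_zpow']

theorem exp_chu_phase_eq_zpow (M : ℕ) (q : ℤ) (m : ℕ) :
    exp (I * ((π * q * m ^ 2 / M : ℝ) : ℂ)) = exp (2 * π * I / (2 * M : ℕ)) ^ (q * m ^ 2) := by
  rw [← exp_int_mul]
  rcases eq_or_ne M 0 with rfl | hM
  · simp
  · congr 1
    push_cast
    field_simp

theorem chu_summand_eq {M : ℕ} (hM : Even M) (hM0 : M ≠ 0) {ζ : ℂ}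
    (hζ : IsPrimitiveRoot ζ (2 * M)) (q : ℤ) (m τ : ℕ) :
    ζ ^ (q * m ^ 2) * conj (ζ ^ (q * ((m + τ) % M : ℕ) ^ 2)) =
      ζ ^ (-(q * τ ^ 2)) * (ζ ^ (-(2 * q * τ))) ^ m := by
  have hζ0 : ζ ≠ 0 := hζ.ne_zero (by omega)
  have hsq : (((m + τ) % M : ℕ) : ℤ) ^ 2 ≡ ((m + τ : ℕ) : ℤ) ^ 2 [ZMOD 2 * M] := by
    refine Int.sq_modEq_sq_of_modEq_of_even (by exact_mod_cast hM) ?_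
    rw [Int.natCast_mod]
    exact Int.mod_modEq _ _
  rw [hζ.conj_zpow (by omega), ← zpow_natCast _ m, ← zpow_mul, ← zpow_add₀ hζ0,
    ← zpow_add₀ hζ0]
  apply hζ.zpow_eq_zpow_of_modEq
  push_cast at hsq ⊢
  calc q * m ^ 2 + -(q * ((m + τ) % M : ℤ) ^ 2)
      ≡ q * m ^ 2 + -(q * ((m : ℤ) + τ) ^ 2) [ZMOD 2 * M] :=
        ((hsq.mul_left q).neg).add_left _
    _ = -(q * τ ^ 2) + -(2 * q * τ) * m := by ring

theorem IsPrimitiveRoot.zpow_neg_two_mul_eq_one_iff {M : ℕ} {ζ : ℂ}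
    (hζ : IsPrimitiveRoot ζ (2 * M)) {q : ℤ} (hq : IsCoprime q M) (τ : ℤ) :
    ζ ^ (-(2 * q * τ)) = 1 ↔ (M : ℤ) ∣ τ := by
  rw [hζ.zpow_eq_one_iff_dvd, dvd_neg, mul_assoc, Nat.cast_mul, Nat.cast_two,
    mul_dvd_mul_iff_left two_ne_zero]
  exact ⟨hq.symm.dvd_of_dvd_mul_left, fun h => h.mul_left q⟩

/-- Chu (Zadoff–Chu) sequences of even length `M` with `gcd(q,M)=1` have perfect
cyclic autocorrelation: `R[τ] = M` if `M ∣ τ` and `R[τ] = 0` otherwise. -/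
theorem chu_perfect_cyclic_acf (M : ℕ) (hM : 0 < M) (hMeven : Even M)
    (q : ℤ) (hq : Int.gcd q (M : ℤ) = 1) (Ψ : ℕ → ℂ)
    (hΨ : ∀ m, Ψ m = Complex.exp (Complex.I *
      ((Real.pi * (q : ℝ) * (m : ℝ) ^ 2 / (M : ℝ) : ℝ) : ℂ)))
    (R : ℕ → ℂ)
    (hR : ∀ τ, R τ = ∑ m ∈ Finset.range M, Ψ m * (starRingEnd ℂ) (Ψ ((m + τ) % M))) :
    ∀ τ, (τ % M = 0 → R τ = (M : ℂ)) ∧ (τ % M ≠ 0 → R τ = 0) := by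
  intro τ
  set ζ : ℂ := exp (2 * π * I / (2 * M : ℕ))
  have hζ : IsPrimitiveRoot ζ (2 * M) := isPrimitiveRoot_exp _ (by omega)
  set ω := ζ ^ (-(2 * q * τ))
  have hRτ : R τ = ζ ^ (-(q * τ ^ 2)) * ∑ m ∈ range M, ω ^ m := by
    rw [hR, mul_sum]
    refine sum_congr rfl fun m _ => ?_
    rw [hΨ, hΨ, exp_chu_phase_eq_zpow, exp_chu_phase_eq_zpow, chu_summand_eq hMeven hM.ne' hζ]
  have hω : ω = 1 ↔ M ∣ τ := by
    rw [hζ.zpow_neg_two_mul_eq_one_iff (Int.isCoprime_iff_gcd_eq_one.mpr hq),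
      Int.natCast_dvd_natCast]
  refine ⟨fun hτ => ?_, fun hτ => ?_⟩
  · obtain ⟨t, ht⟩ := Nat.dvd_of_mod_eq_zero hτ
    obtain ⟨e, he⟩ := hMeven
    have hc : ζ ^ (-(q * τ ^ 2)) = 1 :=
      (hζ.zpow_eq_one_iff_dvd _).mpr ⟨-(q * e * t ^ 2), by rw [ht, he]; push_cast; ring⟩
    simp [hRτ, hc, hω.mpr ⟨t, ht⟩]
  · have hωM : ω ^ M = 1 := by
      rw [← zpow_natCast, ← zpow_mul, hζ.zpow_eq_one_iff_dvd]
      exact ⟨-(q * τ), by push_cast; ring⟩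
    rw [hRτ, geom_sum_eq_zero_of_pow_eq_one hωM (hω.not.mpr (mt Nat.mod_eq_zero_of_dvd hτ)),
      mul_zero]
end
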